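/- The nonlocal variational bivector of KdV: in the algebra R~[r], the element F := p₅ + (4/3)·u·p₃ + 2·u₁·p₂ + ((4/9)·u² + (4/3)·u₂)·p₁ + ((4/9)·u·u₁ + (1/3)·u₃)·p₀ − (1/9)·u₁·r satisfies the lifted linearization equation of KdV: D_t(F) = D_x³(F) + u·D_x(F) + u₁·F. -/
import Mathlib


/-!
STATEMENT 7: The nonlocal variational bivector of KdV: in the algebra `R~[r]`, the element
`F := p₅ + (4/3)·u·p₃ + 2·u₁·p₂ + ((4/9)·u² + (4/3)·u₂)·p₁ + ((4/9)·u·u₁ + (1/3)·u₃)·p₀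
      − (1/9)·u₁·r`
satisfies the lifted linearization equation of KdV: `D_t(F) = D_x³(F) + u·D_x(F) + u₁·F`.
-/

open MvPolynomial

noncomputable section

/-- The algebra `R~[r] = ℚ[u₀,u₁,…,p₀,p₁,…,r]`; `X (.inl k)` is `u_k`,
`X (.inr (.inl k))` is `p_k`, and `X (.inr (.inr ()))` is `r`. -/
abbrev CovRing : Type := MvPolynomial (ℕ ⊕ (ℕ ⊕ Unit)) ℚ

/-- The jet variable `u_k`. -/
def uu (k : ℕ) : CovRing := X (Sum.inl k)

/-- The odd fibre variable `p_k` of the `ℓ*`-covering (modeled as a commuting variable). -/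
def pp (k : ℕ) : CovRing := X (Sum.inr (Sum.inl k))

/-- The odd nonlocal variable `r`. -/
def rr : CovRing := X (Sum.inr (Sum.inr ()))

/-- The total derivative `D_x` on `R~[r]`: `D_x(u_k) = u_{k+1}`, `D_x(p_k) = p_{k+1}`,
`D_x(r) = u₁·p₀`. -/
def Dx : Derivation ℚ CovRing CovRing :=
  mkDerivation ℚ fun i =>
    match i with
    | Sum.inl k => uu (k + 1)
    | Sum.inr (Sum.inl k) => pp (k + 1)
    | Sum.inr (Sum.inr _) => uu 1 * pp 0

/-- The total derivative `D_t` on `R~[r]`: `D_t(u_k) = D_x^k(u₃ + u·u₁)`,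
`D_t(p_k) = D_x^k(p₃ + u·p₁)`, `D_t(r) = u₁·p₂ − u₂·p₁ + (u·u₁ + u₃)·p₀`. -/
def Dt : Derivation ℚ CovRing CovRing :=
  mkDerivation ℚ fun i =>
    match i with
    | Sum.inl k => (⇑Dx)^[k] (uu 3 + uu 0 * uu 1)
    | Sum.inr (Sum.inl k) => (⇑Dx)^[k] (pp 3 + uu 0 * pp 1)
    | Sum.inr (Sum.inr _) => uu 1 * pp 2 - uu 2 * pp 1 + (uu 0 * uu 1 + uu 3) * pp 0

/-- The element `F` corresponding to the nonlocal Hamiltonian operator `A²` of KdV. -/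
def Fel : CovRing :=
  pp 5 + C (4/3 : ℚ) * uu 0 * pp 3 + 2 * uu 1 * pp 2
    + (C (4/9 : ℚ) * uu 0 ^ 2 + C (4/3 : ℚ) * uu 2) * pp 1
    + (C (4/9 : ℚ) * uu 0 * uu 1 + C (1/3 : ℚ) * uu 3) * pp 0
    - C (1/9 : ℚ) * uu 1 * rr


@[simp] lemma Dx_uu (k : ℕ) : Dx (uu k) = uu (k + 1) := by
  simp [Dx, uu, mkDerivation_X]

@[simp] lemma Dx_pp (k : ℕ) : Dx (pp k) = pp (k + 1) := by
  simp [Dx, pp, mkDerivation_X]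

@[simp] lemma Dx_rr : Dx rr = uu 1 * pp 0 := by
  simp [Dx, rr, mkDerivation_X]

@[simp] lemma Dx_C (c : ℚ) : Dx (C c : CovRing) = 0 := by
  simp [Dx]

lemma Dt_uu (k : ℕ) : Dt (uu k) = (⇑Dx)^[k] (uu 3 + uu 0 * uu 1) := by
  simp [Dt, uu, mkDerivation_X]

lemma Dt_pp (k : ℕ) : Dt (pp k) = (⇑Dx)^[k] (pp 3 + uu 0 * pp 1) := by
  simp [Dt, pp, mkDerivation_X]

lemma Dt_rr : Dt rr = uu 1 * pp 2 - uu 2 * pp 1 + (uu 0 * uu 1 + uu 3) * pp 0 := by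
  simp [Dt, rr, mkDerivation_X]

@[simp] lemma Dt_C (c : ℚ) : Dt (C c : CovRing) = 0 := by
  simp [Dt]

@[simp] lemma Dx_two : Dx (2 : CovRing) = 0 := by
  rw [show (2 : CovRing) = C 2 from (map_ofNat C 2).symm]; simp

@[simp] lemma Dt_two : Dt (2 : CovRing) = 0 := by
  rw [show (2 : CovRing) = C 2 from (map_ofNat C 2).symm]; simp

set_option maxHeartbeats 4000000 in
/-- `F` satisfies the lifted linearization equation of KdV:
`D_t(F) = D_x³(F) + u·D_x(F) + u₁·F`. -/
theorem kdv_nonlocal_bivector :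
    Dt Fel = Dx (Dx (Dx Fel)) + uu 0 * Dx Fel + uu 1 * Fel := by
  simp only [Fel, pow_two, map_add, map_sub, Derivation.leibniz, Derivation.leibniz_pow, Dx_uu, Dx_pp,
    Dx_rr, Dx_C, Dx_two, Dt_uu, Dt_pp, Dt_rr, Dt_C, Dt_two, Function.iterate_succ_apply',
    Function.iterate_zero_apply, smul_eq_mul, smul_zero, zero_add, add_zero, mul_zero, zero_mul,
    Nat.reduceAdd]
  apply MvPolynomial.funext
  intro x
  simp only [uu, pp, rr, map_add, map_sub, map_mul, map_pow, eval_C, eval_X, map_ofNat]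
  ring
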